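/- Let φ : (0,∞) → ℂ be a Schwartz function and let Δ_k* be defined by Δ_0* F(r) = F(r) - F(2r) and Δ_{k+1}* F(r) = Δ_k* F(r) - 2^{k+1} Δ_k* F(2r). Then for every k ≥ 0 and r > 0, φ(r) = ∑_{h=0}^{∞} c_{h,k} Δ_k* φ(2^h r), where c_{h,k} = ∑_{h_0+⋯+h_k=h} ∏_{j=1}^k 2^{j h_j}, and the series converges absolutely. -/

import Mathlib

/-- `c_{h,k} = ∑_{h₀+⋯+h_k = h} ∏_{j=1}^k 2^{j h_j}`. -/
noncomputable def cCoeff (h k : ℕ) : ℝ :=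
  ∑ t ∈ Finset.Nat.antidiagonalTuple (k + 1) h, ∏ j : Fin (k + 1), (2 : ℝ) ^ ((j : ℕ) * t j)

/-- The adjoint operators `Δ_k*`: `Δ_0* F(r) = F(r) - F(2r)`,
`Δ_{k+1}* F(r) = Δ_k* F(r) - 2^{k+1} Δ_k* F(2r)`. -/
noncomputable def DeltakStar : ℕ → (ℝ → ℂ) → ℝ → ℂ
  | 0, F => fun r => F r - F (2 * r)
  | (k + 1), F => fun r => DeltakStar k F r - 2 ^ (k + 1) * DeltakStar k F (2 * r)

lemma cCoeff_zero (k : ℕ) : cCoeff 0 k = 1 := by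
  simp [cCoeff, Finset.Nat.antidiagonalTuple_zero_right]

lemma cCoeff_k_zero (h : ℕ) : cCoeff h 0 = 1 := by
  simp [cCoeff, Finset.Nat.antidiagonalTuple_one]

lemma cCoeff_nonneg (h k : ℕ) : 0 ≤ cCoeff h k :=
  Finset.sum_nonneg fun t _ => Finset.prod_nonneg fun j _ => by positivity

lemma cCoeff_snoc (h k : ℕ) :
    cCoeff h (k + 1) = ∑ m ∈ Finset.range (h + 1), 2 ^ ((k + 1) * m) * cCoeff (h - m) k := by
  rw [← Finset.Nat.sum_antidiagonal_eq_sum_range_succ_mk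
    (f := fun p => (2:ℝ) ^ ((k+1) * p.1) * cCoeff p.2 k)]
  unfold cCoeff
  rw [Finset.sum_congr rfl (fun p _ => Finset.mul_sum _ _ _), Finset.sum_sigma']
  refine Finset.sum_nbij'
    (fun t => ⟨(t (Fin.last (k+1)), ∑ j : Fin (k+1), t j.castSucc), Fin.init t⟩)
    (fun x => Fin.snoc x.2 x.1.1) ?_ ?_ ?_ ?_ ?_
  · intro t ht
    simp only [Finset.Nat.mem_antidiagonalTuple] at ht
    simp only [Finset.mem_sigma, Finset.HasAntidiagonal.mem_antidiagonal,
      Finset.Nat.mem_antidiagonalTuple, Fin.init]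
    refine ⟨?_, trivial⟩
    rw [← ht, Fin.sum_univ_castSucc (f := t)]
    ring
  · rintro ⟨⟨a, b⟩, t⟩ hx
    simp only [Finset.mem_sigma, Finset.HasAntidiagonal.mem_antidiagonal,
      Finset.Nat.mem_antidiagonalTuple] at hx ⊢
    rw [Fin.sum_univ_castSucc]
    simp only [Fin.snoc_castSucc, Fin.snoc_last]
    rw [hx.2, Nat.add_comm]
    exact hx.1
  · intro t ht
    simp [Fin.snoc_init_self]
  · rintro ⟨⟨a, b⟩, t⟩ hx
    simp only [Finset.mem_sigma, Finset.HasAntidiagonal.mem_antidiagonal,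
      Finset.Nat.mem_antidiagonalTuple] at hx
    simp [Fin.init_snoc, Fin.snoc_last, hx.2]
  · intro t ht
    rw [Fin.prod_univ_castSucc]
    simp only [Fin.snoc_castSucc, Fin.snoc_last, Fin.val_last, Fin.coe_castSucc, Fin.init]
    ring

lemma cCoeff_succ (h k : ℕ) :
    cCoeff (h + 1) (k + 1) = cCoeff (h + 1) k + 2 ^ (k + 1) * cCoeff h (k + 1) := by
  rw [cCoeff_snoc (h + 1) k, cCoeff_snoc h k, Finset.sum_range_succ', Finset.mul_sum]
  simp only [Nat.mul_zero, pow_zero, one_mul, Nat.sub_zero]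
  rw [add_comm]
  congr 1
  apply Finset.sum_congr rfl
  intro m _
  rw [Nat.succ_sub_succ]
  rw [Nat.mul_add, Nat.mul_one, pow_add]
  ring

lemma cCoeff_le (h k : ℕ) : cCoeff h k ≤ 2 ^ (k * (h + 1)) := by
  induction k generalizing h with
  | zero => simp [cCoeff_k_zero]
  | succ k ih =>
    rw [cCoeff_snoc]
    have step : ∀ m ∈ Finset.range (h + 1),
        (2:ℝ) ^ ((k + 1) * m) * cCoeff (h - m) k ≤ 2 ^ (k * h + k + m) := by
      intro m hm
      rw [Finset.mem_range] at hm
      calc (2:ℝ) ^ ((k + 1) * m) * cCoeff (h - m) k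
          ≤ 2 ^ ((k + 1) * m) * 2 ^ (k * (h - m + 1)) := by
            apply mul_le_mul_of_nonneg_left (ih _) (by positivity)
        _ = 2 ^ ((k + 1) * m + k * (h - m + 1)) := by rw [← pow_add]
        _ = 2 ^ (k * h + k + m) := by
            obtain ⟨d, rfl⟩ : ∃ d, h = m + d := ⟨h - m, by omega⟩
            congr 1
            rw [Nat.add_sub_cancel_left]
            ring
    calc (∑ m ∈ Finset.range (h + 1), (2:ℝ) ^ ((k + 1) * m) * cCoeff (h - m) k)
        ≤ ∑ m ∈ Finset.range (h + 1), (2:ℝ) ^ (k * h + k + m) := Finset.sum_le_sum step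
      _ = 2 ^ (k * h + k) * ∑ m ∈ Finset.range (h + 1), (2:ℝ) ^ m := by
          rw [Finset.mul_sum]; exact Finset.sum_congr rfl fun m _ => by rw [pow_add]
      _ ≤ 2 ^ (k * h + k) * 2 ^ (h + 1) := by
          apply mul_le_mul_of_nonneg_left _ (by positivity)
          rw [geom_sum_eq (by norm_num)]
          norm_num
      _ = 2 ^ ((k + 1) * (h + 1)) := by rw [← pow_add]; congr 1; ring

lemma deltak_decay (φ : SchwartzMap ℝ ℂ) (k N : ℕ) :
    ∃ M : ℝ, 0 ≤ M ∧ ∀ x : ℝ, 0 < x → ‖DeltakStar k (fun y => φ y) x‖ ≤ M / x ^ N := by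
  induction k with
  | zero =>
    obtain ⟨C, hC⟩ := φ.decay' N 0
    have hC0 : 0 ≤ C := le_trans (by positivity) (hC 1)
    have hφ : ∀ x : ℝ, 0 < x → ‖φ x‖ ≤ C / x ^ N := by
      intro x hx
      rw [le_div_iff₀ (by positivity), mul_comm]
      have := hC x
      rwa [norm_iteratedFDeriv_zero, Real.norm_eq_abs, abs_of_pos hx] at this
    refine ⟨2 * C, by positivity, fun x hx => ?_⟩
    have h2 : ‖φ (2 * x)‖ ≤ C / x ^ N := by
      refine le_trans (hφ _ (by positivity)) ?_
      apply div_le_div_of_nonneg_left hC0 (by positivity)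
      apply pow_le_pow_left₀ hx.le (by linarith)
    calc ‖DeltakStar 0 (fun y => φ y) x‖ ≤ ‖φ x‖ + ‖φ (2 * x)‖ := norm_sub_le _ _
      _ ≤ C / x ^ N + C / x ^ N := add_le_add (hφ x hx) h2
      _ = 2 * C / x ^ N := by ring
  | succ k ih =>
    obtain ⟨M, hM0, hM⟩ := ih
    refine ⟨(1 + 2 ^ (k + 1)) * M, by positivity, fun x hx => ?_⟩
    have h2 : ‖DeltakStar k (fun y => φ y) (2 * x)‖ ≤ M / x ^ N := by
      refine le_trans (hM _ (by positivity)) ?_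
      apply div_le_div_of_nonneg_left hM0 (by positivity)
      apply pow_le_pow_left₀ hx.le (by linarith)
    calc ‖DeltakStar (k + 1) (fun y => φ y) x‖
        ≤ ‖DeltakStar k (fun y => φ y) x‖ + ‖(2:ℂ) ^ (k + 1) * DeltakStar k (fun y => φ y) (2 * x)‖ :=
          norm_sub_le _ _
      _ ≤ M / x ^ N + 2 ^ (k + 1) * (M / x ^ N) := by
          refine add_le_add (hM x hx) ?_
          rw [norm_mul, norm_pow]
          simp only [Complex.norm_ofNat]
          exact mul_le_mul_of_nonneg_left h2 (by positivity)
      _ = (1 + 2 ^ (k + 1)) * M / x ^ N := by ring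

lemma summable_main (φ : SchwartzMap ℝ ℂ) (k l : ℕ) (r : ℝ) (hr : 0 < r) :
    Summable (fun h : ℕ => cCoeff h l * ‖DeltakStar k (fun y => φ y) (2 ^ h * r)‖) := by
  obtain ⟨M, hM0, hM⟩ := deltak_decay φ k (l + 2)
  have key : ∀ h : ℕ, cCoeff h l * ‖DeltakStar k (fun y => φ y) (2 ^ h * r)‖
      ≤ (2 ^ l * M / r ^ (l + 2)) * (1 / 4 : ℝ) ^ h := by
    intro h
    have hx : (0:ℝ) < 2 ^ h * r := by positivity
    have h1 : cCoeff h l * ‖DeltakStar k (fun y => φ y) (2 ^ h * r)‖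
        ≤ 2 ^ (l * (h + 1)) * (M / (2 ^ h * r) ^ (l + 2)) :=
      mul_le_mul (cCoeff_le h l) (hM _ hx) (norm_nonneg _) (by positivity)
    refine le_trans h1 (le_of_eq ?_)
    have e1 : ((2:ℝ) ^ h * r) ^ (l + 2) = 2 ^ (h * l) * 2 ^ (2 * h) * r ^ (l + 2) := by
      rw [mul_pow, ← pow_mul]
      congr 2
      ring
    have e2 : (2:ℝ) ^ (l * (h + 1)) = 2 ^ l * 2 ^ (h * l) := by
      rw [← pow_add]; congr 1; ring
    have e3 : ((1:ℝ) / 4) ^ h = 1 / 2 ^ (2 * h) := by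
      rw [div_pow, one_pow, pow_mul]
      norm_num
    rw [e1, e2, e3]
    have h2h : (0:ℝ) < 2 ^ (h * l) := by positivity
    field_simp
  refine Summable.of_nonneg_of_le (fun h => ?_) key ?_
  · exact mul_nonneg (cCoeff_nonneg h l) (norm_nonneg _)
  · exact (summable_geometric_of_lt_one (by norm_num) (by norm_num)).mul_left _

lemma tendsto_phi (φ : SchwartzMap ℝ ℂ) (r : ℝ) (hr : 0 < r) :
    Filter.Tendsto (fun n : ℕ => φ (2 ^ n * r)) Filter.atTop (nhds 0) := by
  obtain ⟨C, hC⟩ := φ.decay' 1 0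
  have hC0 : 0 ≤ C := le_trans (by positivity) (hC 1)
  rw [tendsto_zero_iff_norm_tendsto_zero]
  have hb : Filter.Tendsto (fun n : ℕ => C / (2 ^ n * r)) Filter.atTop (nhds 0) := by
    rw [show (fun n : ℕ => C / (2 ^ n * r)) = fun n : ℕ => (C / r) * (1 / 2) ^ n by
      funext n
      rw [one_div, inv_pow, mul_comm ((2:ℝ) ^ n) r, ← div_div, div_eq_mul_inv (C / r)]]
    rw [show (0:ℝ) = (C / r) * 0 by ring]
    exact (tendsto_pow_atTop_nhds_zero_of_lt_one (by norm_num) (by norm_num)).const_mul _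
  refine squeeze_zero (fun n => norm_nonneg _) (fun n => ?_) hb
  have hx : (0:ℝ) < 2 ^ n * r := by positivity
  have := hC (2 ^ n * r)
  rw [norm_iteratedFDeriv_zero, pow_one, Real.norm_eq_abs, abs_of_pos hx] at this
  rw [le_div_iff₀ hx, mul_comm]
  exact this

/-- For a Schwartz function `φ`, every `k ≥ 0` and `r > 0`, one has
`φ(r) = ∑_{h=0}^∞ c_{h,k} Δ_k* φ(2^h r)`, with absolute convergence of the series. -/
theorem deltakStar_expansion (φ : SchwartzMap ℝ ℂ) (k : ℕ) (r : ℝ) (hr : 0 < r) :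
    Summable (fun h : ℕ => cCoeff h k * ‖DeltakStar k (fun x => φ x) (2 ^ h * r)‖) ∧
    HasSum (fun h : ℕ => (cCoeff h k : ℂ) * DeltakStar k (fun x => φ x) (2 ^ h * r)) (φ r) := by
  have hnorm : ∀ (k l : ℕ) (h : ℕ),
      ‖(cCoeff h l : ℂ) * DeltakStar k (fun x => φ x) (2 ^ h * r)‖
      = cCoeff h l * ‖DeltakStar k (fun x => φ x) (2 ^ h * r)‖ := by
    intro k l h
    rw [norm_mul, Complex.norm_real, Real.norm_eq_abs, abs_of_nonneg (cCoeff_nonneg h l)]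
  have hsummable : ∀ k l : ℕ,
      Summable (fun h : ℕ => (cCoeff h l : ℂ) * DeltakStar k (fun x => φ x) (2 ^ h * r)) := by
    intro k l
    apply Summable.of_norm
    simpa only [hnorm k l] using summable_main φ k l r hr
  refine ⟨summable_main φ k k r hr, ?_⟩
  rw [(hsummable k k).hasSum_iff_tendsto_nat]
  induction k with
  | zero =>
    have hterm : ∀ n : ℕ, (∑ h ∈ Finset.range n,
        (cCoeff h 0 : ℂ) * DeltakStar 0 (fun x => φ x) (2 ^ h * r))
        = φ r - φ (2 ^ n * r) := by
      intro n
      have : ∀ h : ℕ, (cCoeff h 0 : ℂ) * DeltakStar 0 (fun x => φ x) (2 ^ h * r)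
          = φ (2 ^ h * r) - φ (2 ^ (h + 1) * r) := by
        intro h
        rw [cCoeff_k_zero]
        simp only [Complex.ofReal_one, one_mul, DeltakStar]
        congr 2
        ring
      rw [Finset.sum_congr rfl (fun h _ => this h), Finset.sum_range_sub' (fun h => φ (2 ^ h * r))]
      norm_num
    simp only [hterm]
    rw [show nhds (φ r : ℂ) = nhds ((φ r : ℂ) - 0) by norm_num]
    exact Filter.Tendsto.const_sub _ (tendsto_phi φ r hr)
  | succ k ih =>
    -- f h = cCoeff h k * Δ_k(2^h r), g h = cCoeff h (k+1) * Δ_k(2^h r)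
    set f : ℕ → ℂ := fun h => (cCoeff h k : ℂ) * DeltakStar k (fun x => φ x) (2 ^ h * r) with hf
    set g : ℕ → ℂ := fun h => (cCoeff h (k + 1) : ℂ) * DeltakStar k (fun x => φ x) (2 ^ h * r)
      with hg
    have hterm : ∀ h : ℕ, (cCoeff h (k + 1) : ℂ) * DeltakStar (k + 1) (fun x => φ x) (2 ^ h * r)
        = g h - g (h + 1) + f (h + 1) := by
      intro h
      have h2x : 2 * (2 ^ h * r) = 2 ^ (h + 1) * r := by ring
      have hrec : (cCoeff (h + 1) (k + 1) : ℂ)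
          = (cCoeff (h + 1) k : ℂ) + 2 ^ (k + 1) * (cCoeff h (k + 1) : ℂ) := by
        exact_mod_cast cCoeff_succ h k
      simp only [hf, hg, DeltakStar, hrec, h2x]
      ring
    have hpartial : ∀ n : ℕ, (∑ h ∈ Finset.range n,
        (cCoeff h (k + 1) : ℂ) * DeltakStar (k + 1) (fun x => φ x) (2 ^ h * r))
        = (∑ h ∈ Finset.range (n + 1), f h) - g n := by
      intro n
      rw [Finset.sum_congr rfl (fun h _ => hterm h)]
      rw [Finset.sum_add_distrib, Finset.sum_range_sub' g]
      have hshift : (∑ h ∈ Finset.range n, f (h + 1)) = (∑ h ∈ Finset.range (n + 1), f h) - f 0 := by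
        rw [Finset.sum_range_succ' f n]
        ring
      rw [hshift]
      have h00 : g 0 = f 0 := by
        simp only [hf, hg, cCoeff_zero]
      rw [h00]
      ring
    simp only [hpartial]
    have hg0 : Filter.Tendsto g Filter.atTop (nhds 0) := by
      rw [tendsto_zero_iff_norm_tendsto_zero]
      have := (summable_main φ k (k + 1) r hr).tendsto_atTop_zero
      refine squeeze_zero (fun n => norm_nonneg _) (fun n => le_of_eq ?_) this
      exact hnorm k (k + 1) n
    have hfsum : Filter.Tendsto (fun n : ℕ => ∑ h ∈ Finset.range n, f h)
        Filter.atTop (nhds (φ r)) := ih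
    have hfsum' : Filter.Tendsto (fun n : ℕ => ∑ h ∈ Finset.range (n + 1), f h)
        Filter.atTop (nhds (φ r)) := hfsum.comp (Filter.tendsto_add_atTop_nat 1)
    rw [show nhds (φ r : ℂ) = nhds ((φ r : ℂ) - 0) by norm_num]
    exact hfsum'.sub hg0
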